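/- Let f : {-1,+1}^n → ℝ be given by a multilinear polynomial of degree at most k, f(x) = ∑_{|S| ≤ k} a_S ∏_{i∈S} x_i, with real coefficients. Then its fully decoupled version satisfies sup |f̃(x^{(1)}, …, x^{(k)})| ≤ (2e)^k · sup_{x ∈ {-1,+1}^n} |f(x)|, where the supremum on the left is over all x^{(1)}, …, x^{(k)} ∈ {-1,+1}^n. -/

import Mathlib

open Finset

/-- The ±1 value corresponding to a Boolean. -/
noncomputable def pm (b : Bool) : ℝ := if b then 1 else -1

/-- Evaluation of the multilinear polynomial with coefficients `a` at `x`. -/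
noncomputable def evalPoly {n : ℕ} (a : Finset (Fin n) → ℝ) (x : Fin n → ℝ) : ℝ :=
  ∑ S : Finset (Fin n), a S * ∏ i ∈ S, x i

/-- Fully decoupled version
`f̃(x⁽¹⁾,…,x⁽ᵏ⁾) = ∑_S ((k−|S|)!/k!) a_S ∑_{injective b : S → [k]} ∏_{i∈S} x_i^{(b(i))}`
(the `S = ∅` term equals `a_∅`). -/
noncomputable def decF {n : ℕ} (k : ℕ) (a : Finset (Fin n) → ℝ)
    (X : Fin k → Fin n → ℝ) : ℝ :=
  ∑ S : Finset (Fin n),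
    ((Nat.factorial (k - S.card) : ℝ) / (Nat.factorial k : ℝ)) * a S *
      ∑ b ∈ Finset.univ.filter (fun b : {i // i ∈ S} → Fin k => Function.Injective b),
        ∏ i : {i // i ∈ S}, X (b i) (i : Fin n)

/-!
Write `g(θ, y) = ∑_S a_S θ^(k-|S|) ∏_{i∈S} y_i` for the homogenization of `f`.

Polarization: summing `(∏_j ε_j) · g(∑_j ε_j, ∑_j ε_j x⁽ʲ⁾)` over all signs `ε ∈ {±1}^k`
kills every monomial that does not use each of the `k` blocks exactly once, and what survives
is `2^k k! f̃(x⁽¹⁾, …, x⁽ᵏ⁾)`. The arguments of `g` have entries of size at most `k`, so by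
homogeneity `|f̃| ≤ (k^k / k!) · sup |g| ≤ e^k · sup |g|`, the sup taken over `[-1,1]^(1+n)`.

Homogenization: `|g| ≤ 2^k M` on `[-1,1]^(1+n)`. Being multilinear, `f` is a convex combination
of its values at the vertices, hence bounded by `M` on all of `[-1,1]^n`. The polynomial
`G(z) = g(z, (z² + 1)/2 · y)` satisfies `(z² + 1)/2 = z · Re z` on the unit circle, so there
`|G(z)| = |f(Re z · y)| ≤ M`, and by the maximum modulus principle also on the disc. At
`z = θ / (1 + s)` with `s = √(1 - θ²)` one has `(z² + 1)/2 = 1/(1 + s)`, so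
`G(z) = g(θ, y) / (1 + s)^k` and `|g(θ, y)| ≤ (1 + s)^k M ≤ 2^k M`.
-/

lemma pm_mul_self (b : Bool) : pm b * pm b = 1 := by cases b <;> norm_num [pm]

lemma abs_pm (b : Bool) : |pm b| = 1 := by cases b <;> norm_num [pm]

lemma pm_not (b : Bool) : pm (!b) = -pm b := by cases b <;> norm_num [pm]

section MaxPrinciple

variable {n : ℕ}

noncomputable def cubeWeight (y : Fin n → ℝ) (x : Fin n → Bool) : ℝ :=
  ∏ i, (1 + pm (x i) * y i) / 2

lemma sum_cubeWeight_mul_prod (y : Fin n → ℝ) (S : Finset (Fin n)) :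
    ∑ x, cubeWeight y x * ∏ i ∈ S, pm (x i) = ∏ i ∈ S, y i := by
  classical
  have hcoord : ∀ i, ∑ v : Bool, (1 + pm v * y i) / 2 * (if i ∈ S then pm v else 1) =
      if i ∈ S then y i else 1 := by
    intro i; split_ifs <;> simp [pm] <;> ring
  have hS : ∀ f : Fin n → ℝ, ∏ i ∈ S, f i = ∏ i, if i ∈ S then f i else 1 := fun f => by
    rw [Finset.prod_ite_mem, univ_inter]
  simp_rw [cubeWeight, hS, ← Finset.prod_mul_distrib]
  rw [← Finset.prod_congr rfl fun i _ => hcoord i, Fintype.prod_sum]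

lemma cubeWeight_nonneg {y : Fin n → ℝ} (hy : ∀ i, |y i| ≤ 1) (x : Fin n → Bool) :
    0 ≤ cubeWeight y x := by
  refine Finset.prod_nonneg fun i _ => div_nonneg ?_ zero_le_two
  have := neg_abs_le (pm (x i) * y i)
  rw [abs_mul, abs_pm, one_mul] at this
  linarith [hy i]

lemma sum_cubeWeight (y : Fin n → ℝ) : ∑ x, cubeWeight y x = 1 := by
  simpa using sum_cubeWeight_mul_prod y ∅

lemma evalPoly_eq_sum_cubeWeight (a : Finset (Fin n) → ℝ) (y : Fin n → ℝ) :
    evalPoly a y = ∑ x, cubeWeight y x * evalPoly a (fun i => pm (x i)) := by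
  simp_rw [evalPoly, Finset.mul_sum]
  rw [Finset.sum_comm]
  refine Finset.sum_congr rfl fun S _ => ?_
  rw [← sum_cubeWeight_mul_prod y S, Finset.mul_sum]
  exact Finset.sum_congr rfl fun x _ => by ring

theorem abs_evalPoly_le_of_abs_le_one (a : Finset (Fin n) → ℝ) {M : ℝ}
    (hM : ∀ x : Fin n → Bool, |evalPoly a (fun i => pm (x i))| ≤ M)
    {y : Fin n → ℝ} (hy : ∀ i, |y i| ≤ 1) : |evalPoly a y| ≤ M := by
  calc |evalPoly a y| ≤ ∑ x, cubeWeight y x * |evalPoly a (fun i => pm (x i))| := by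
        rw [evalPoly_eq_sum_cubeWeight]
        refine (Finset.abs_sum_le_sum_abs _ _).trans_eq (Finset.sum_congr rfl fun x _ => ?_)
        rw [abs_mul, abs_of_nonneg (cubeWeight_nonneg hy x)]
    _ ≤ ∑ x, cubeWeight y x * M :=
        Finset.sum_le_sum fun x _ => mul_le_mul_of_nonneg_left (hM x) (cubeWeight_nonneg hy x)
    _ = M := by rw [← Finset.sum_mul, sum_cubeWeight, one_mul]

end MaxPrinciple

section Homogenize

variable {n : ℕ}

def homogenize {R : Type*} [CommSemiring R] (k : ℕ) (a : Finset (Fin n) → R) (θ : R)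
    (y : Fin n → R) : R :=
  ∑ S, a S * θ ^ (k - S.card) * ∏ i ∈ S, y i

lemma homogenize_one (k : ℕ) (a : Finset (Fin n) → ℝ) (y : Fin n → ℝ) :
    homogenize k a 1 y = evalPoly a y := by
  simp [homogenize, evalPoly]

lemma homogenize_mul {R : Type*} [CommSemiring R] {k : ℕ} {a : Finset (Fin n) → R}
    (hdeg : ∀ S : Finset (Fin n), k < S.card → a S = 0) (c θ : R) (y : Fin n → R) :
    homogenize k a (c * θ) (fun i => c * y i) = c ^ k * homogenize k a θ y := by
  rw [homogenize, homogenize, Finset.mul_sum]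
  refine Finset.sum_congr rfl fun S _ => ?_
  rcases le_or_gt S.card k with hS | hS
  · rw [Finset.prod_mul_distrib, Finset.prod_const, mul_pow, ← Nat.sub_add_cancel hS, pow_add,
      Nat.add_sub_cancel]
    ring
  · simp [hdeg S hS]

lemma ofReal_homogenize (k : ℕ) (a : Finset (Fin n) → ℝ) (θ : ℝ) (y : Fin n → ℝ) :
    ((homogenize k a θ y : ℝ) : ℂ) = homogenize k (fun S => (a S : ℂ)) θ (fun i => (y i : ℂ)) := by
  simp [homogenize]

lemma sq_add_one_div_two_of_norm_eq_one {z : ℂ} (hz : ‖z‖ = 1) : (z ^ 2 + 1) / 2 = z * z.re := by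
  have hconj : z * (starRingEnd ℂ) z = 1 := by
    rw [Complex.mul_conj, Complex.normSq_eq_norm_sq, hz]; norm_num
  have hre : z + (starRingEnd ℂ) z = 2 * z.re := by rw [Complex.add_conj]; push_cast; ring
  linear_combination (z / 2) * hre - hconj / 2

theorem norm_homogenize_le_of_norm_le_one {k : ℕ} {a : Finset (Fin n) → ℝ}
    (hdeg : ∀ S : Finset (Fin n), k < S.card → a S = 0) {M : ℝ}
    (hM : ∀ x : Fin n → Bool, |evalPoly a (fun i => pm (x i))| ≤ M)
    {y : Fin n → ℝ} (hy : ∀ i, |y i| ≤ 1) {z : ℂ} (hz : ‖z‖ ≤ 1) :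
    ‖homogenize k (fun S => (a S : ℂ)) z (fun i => (z ^ 2 + 1) / 2 * y i)‖ ≤ M := by
  have hdegℂ : ∀ S : Finset (Fin n), k < S.card → (a S : ℂ) = 0 := fun S hS => by
    simp [hdeg S hS]
  refine Complex.norm_le_of_forall_mem_frontier_norm_le (f := fun w : ℂ =>
    homogenize k (fun S => (a S : ℂ)) w (fun i => (w ^ 2 + 1) / 2 * y i)) Metric.isBounded_ball
    (Differentiable.diffContOnCl (by unfold homogenize; fun_prop)) (fun w hw => ?_)
    (by rwa [closure_ball 0 one_ne_zero, mem_closedBall_zero_iff])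
  rw [frontier_ball 0 one_ne_zero, mem_sphere_zero_iff_norm] at hw
  have hGw : homogenize k (fun S => (a S : ℂ)) w (fun i => (w ^ 2 + 1) / 2 * y i) =
      w ^ k * (evalPoly a (fun i => w.re * y i) : ℂ) := by
    rw [← homogenize_one, ofReal_homogenize, ← homogenize_mul hdegℂ, Complex.ofReal_one, mul_one,
      sq_add_one_div_two_of_norm_eq_one hw]
    push_cast
    simp_rw [mul_assoc]
  rw [hGw, norm_mul, norm_pow, hw, one_pow, one_mul, Complex.norm_real, Real.norm_eq_abs]
  refine abs_evalPoly_le_of_abs_le_one a hM fun i => ?_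
  rw [abs_mul]
  exact mul_le_one₀ ((Complex.abs_re_le_norm w).trans hw.le) (abs_nonneg _) (hy i)

theorem abs_homogenize_le {k : ℕ} {a : Finset (Fin n) → ℝ}
    (hdeg : ∀ S : Finset (Fin n), k < S.card → a S = 0) {M : ℝ}
    (hM : ∀ x : Fin n → Bool, |evalPoly a (fun i => pm (x i))| ≤ M)
    {θ : ℝ} (hθ : |θ| ≤ 1) {y : Fin n → ℝ} (hy : ∀ i, |y i| ≤ 1) :
    |homogenize k a θ y| ≤ 2 ^ k * M := by
  set s := Real.sqrt (1 - θ ^ 2)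
  have hs0 : 0 ≤ s := Real.sqrt_nonneg _
  have hs1 : s ≤ 1 := Real.sqrt_le_one.mpr (by nlinarith [sq_nonneg θ])
  have hss : s ^ 2 = 1 - θ ^ 2 := Real.sq_sqrt (by nlinarith [abs_le.mp hθ])
  have hz₀ : ((θ / (1 + s)) ^ 2 + 1) / 2 = (1 + s)⁻¹ := by
    field_simp
    linear_combination hss
  have hz₀θ : θ / (1 + s) = (1 + s)⁻¹ * θ := by ring
  have hbound := norm_homogenize_le_of_norm_le_one hdeg hM hy (z := (θ / (1 + s) : ℝ)) <| by
    rw [Complex.norm_real, Real.norm_eq_abs, abs_div, abs_of_pos (by linarith : (0:ℝ) < 1 + s)]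
    exact div_le_one_of_le₀ (by linarith) (by linarith)
  have hcast : ∀ t : ℝ, homogenize k (fun S => (a S : ℂ)) t (fun i => ((t : ℂ) ^ 2 + 1) / 2 * y i)
      = ((homogenize k a t (fun i => (t ^ 2 + 1) / 2 * y i) : ℝ) : ℂ) := fun t => by
    rw [ofReal_homogenize]; push_cast; rfl
  rw [hcast, hz₀, hz₀θ, homogenize_mul hdeg, Complex.norm_real, Real.norm_eq_abs,
    abs_mul, abs_pow, abs_inv, abs_of_pos (by positivity), inv_pow,
    inv_mul_le_iff₀ (by positivity)] at hbound
  have hM0 : 0 ≤ M := (abs_nonneg _).trans (hM fun _ => true)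
  calc |homogenize k a θ y| ≤ (1 + s) ^ k * M := hbound
    _ ≤ 2 ^ k * M := by gcongr; linarith

theorem abs_homogenize_le_mul_pow {k : ℕ} {a : Finset (Fin n) → ℝ}
    (hdeg : ∀ S : Finset (Fin n), k < S.card → a S = 0) {M : ℝ}
    (hM : ∀ x : Fin n → Bool, |evalPoly a (fun i => pm (x i))| ≤ M)
    {R θ : ℝ} (hR : 0 ≤ R) (hθ : |θ| ≤ R) {y : Fin n → ℝ} (hy : ∀ i, |y i| ≤ R) :
    |homogenize k a θ y| ≤ R ^ k * (2 ^ k * M) := by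
  have hscale : ∀ t, |t| ≤ R → R * (t / R) = t ∧ |t / R| ≤ 1 := fun t ht =>
    ⟨mul_div_cancel_of_imp' fun h => abs_nonpos_iff.mp (h ▸ ht),
      by rw [abs_div, abs_of_nonneg hR]; exact div_le_one_of_le₀ ht hR⟩
  have hy' : y = fun i => R * (y i / R) := funext fun i => ((hscale _ (hy i)).1).symm
  rw [← (hscale θ hθ).1, hy', homogenize_mul hdeg, abs_mul, abs_pow, abs_of_nonneg hR]
  exact mul_le_mul_of_nonneg_left (abs_homogenize_le hdeg hM (hscale θ hθ).2
    fun i => (hscale _ (hy i)).2) (by positivity)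

end Homogenize

section Polarization

open Function

lemma sum_embedding_sum_comp_inl {α β γ : Type*} [Fintype α] [Fintype β] [Fintype γ]
    [DecidableEq γ] (hcard : Fintype.card α + Fintype.card β = Fintype.card γ)
    (F : (α ↪ γ) → ℝ) :
    ∑ e : α ⊕ β ↪ γ, F (Embedding.inl.trans e) = (Fintype.card β).factorial * ∑ f : α ↪ γ, F f := by
  classical
  set E := Equiv.sumEmbeddingEquivSigmaEmbeddingRestricted (α := α) (β := β) (γ := γ)
  have hE : ∀ p, Embedding.inl.trans (E.symm p) = p.1 := fun p =>
    congrArg Sigma.fst (E.apply_symm_apply p)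
  rw [← E.symm.sum_comp, Fintype.sum_sigma, Finset.mul_sum]
  refine Finset.sum_congr rfl fun f _ => ?_
  simp_rw [hE, Finset.sum_const, Finset.card_univ, Fintype.card_embedding_eq,
    Fintype.card_compl_set, Set.card_range_of_injective f.injective, nsmul_eq_mul]
  rw [← hcard, Nat.add_sub_cancel_left, Nat.descFactorial_self]

lemma sum_filter_injective_eq_sum_embedding {α β : Type*} [Fintype α] [Fintype β]
    [DecidableEq α] [DecidableEq β] (F : (α → β) → ℝ) :
    ∑ b ∈ univ.filter (fun b : α → β => Injective b), F b = ∑ e : α ↪ β, F e := by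
  rw [← (Equiv.subtypeInjectiveEquivEmbedding α β).sum_comp, Finset.sum_subtype]
  · rfl
  · simp

variable {τ κ : Type*} [Fintype τ] [Fintype κ] [DecidableEq κ]

lemma prod_pm_update (ε : κ → Bool) (j₀ : κ) (v : Bool) :
    ∏ j, pm (update ε j₀ v j) = pm v * ∏ j ∈ {j₀}ᶜ, pm (ε j) := by
  rw [Fintype.prod_eq_mul_prod_compl j₀, update_self]
  congr 1
  exact Finset.prod_congr rfl fun j hj => by
    rw [update_of_ne (by simpa using hj)]

lemma sum_prod_pm_mul_prod_pm_comp (hcard : Fintype.card τ = Fintype.card κ) (b : τ → κ) :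
    ∑ ε : κ → Bool, (∏ j, pm (ε j)) * ∏ t, pm (ε (b t)) =
      if Injective b then 2 ^ Fintype.card κ else 0 := by
  split_ifs with hb
  · have hbij : Bijective b := (Fintype.bijective_iff_injective_and_card b).mpr ⟨hb, hcard⟩
    have hone : ∀ ε : κ → Bool, (∏ j, pm (ε j)) * ∏ t, pm (ε (b t)) = 1 := fun ε => by
      rw [hbij.prod_comp fun j => pm (ε j), ← Finset.prod_mul_distrib]
      simp [pm_mul_self]
    simp [hone]
  · have hsurj : ¬ Surjective b := fun h =>
      hb ((Fintype.bijective_iff_surjective_and_card b).mpr ⟨h, hcard⟩).1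
    obtain ⟨j₀, hj₀⟩ := not_forall.mp hsurj
    push Not at hj₀
    refine Finset.sum_ninvolution (fun ε => update ε j₀ (!ε j₀)) (fun ε => ?_) (fun ε _ h => ?_)
      (fun _ => Finset.mem_univ _) (fun ε => by simp)
    · have hcomp : ∏ t, pm (update ε j₀ (!ε j₀) (b t)) = ∏ t, pm (ε (b t)) :=
        Finset.prod_congr rfl fun t _ => by rw [update_of_ne (hj₀ t)]
      rw [hcomp, prod_pm_update, pm_not, Fintype.prod_eq_mul_prod_compl j₀]
      ring
    · simpa using congrFun h j₀

theorem sum_prod_pm_mul_prod_sum (hcard : Fintype.card τ = Fintype.card κ) (w : τ → κ → ℝ) :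
    ∑ ε : κ → Bool, (∏ j, pm (ε j)) * ∏ t, ∑ j, pm (ε j) * w t j =
      2 ^ Fintype.card κ * ∑ e : τ ↪ κ, ∏ t, w t (e t) := by
  classical
  calc ∑ ε : κ → Bool, (∏ j, pm (ε j)) * ∏ t, ∑ j, pm (ε j) * w t j
      = ∑ b : τ → κ, (∑ ε : κ → Bool, (∏ j, pm (ε j)) * ∏ t, pm (ε (b t))) * ∏ t, w t (b t) := by
        simp_rw [Fintype.prod_sum, Finset.prod_mul_distrib, Finset.mul_sum, Finset.sum_mul]
        rw [Finset.sum_comm]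
        simp_rw [mul_assoc]
    _ = 2 ^ Fintype.card κ * ∑ e : τ ↪ κ, ∏ t, w t (e t) := by
        simp_rw [sum_prod_pm_mul_prod_pm_comp hcard, ite_mul, zero_mul, Finset.mul_sum]
        rw [← Finset.sum_filter, sum_filter_injective_eq_sum_embedding]

lemma sum_prod_pm_mul_pow_mul_prod {n k : ℕ} (x : Fin k → Fin n → ℝ) {S : Finset (Fin n)}
    (hS : #S ≤ k) :
    ∑ ε : Fin k → Bool, (∏ j, pm (ε j)) *
        ((∑ j, pm (ε j)) ^ (k - #S) * ∏ i ∈ S, ∑ j, pm (ε j) * x j i) =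
      2 ^ k * (k - #S).factorial *
        ∑ b ∈ univ.filter (fun b : S → Fin k => Injective b), ∏ i : S, x (b i) i := by
  let w : S ⊕ Fin (k - #S) → Fin k → ℝ := Sum.elim (fun i j => x j i) (fun _ _ => 1)
  have hcard : Fintype.card S + Fintype.card (Fin (k - #S)) = Fintype.card (Fin k) := by
    simp [Nat.add_sub_cancel' hS]
  have hprod : ∀ ε : Fin k → Bool, (∑ j, pm (ε j)) ^ (k - #S) * ∏ i ∈ S, ∑ j, pm (ε j) * x j i =
      ∏ t, ∑ j, pm (ε j) * w t j := fun ε => by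
    rw [Fintype.prod_sum_type, ← Finset.prod_coe_sort S]
    simp [w, mul_comm]
  have hw : ∀ e : S ⊕ Fin (k - #S) ↪ Fin k, ∏ t, w t (e t) =
      ∏ i : S, x ((Embedding.inl.trans e) i) i := fun e => by
    simp [w, Fintype.prod_sum_type]
  simp_rw [hprod, sum_prod_pm_mul_prod_sum ((Fintype.card_sum ..).trans hcard), hw]
  rw [sum_embedding_sum_comp_inl hcard (fun f => ∏ i : S, x (f i) i),
    sum_filter_injective_eq_sum_embedding, Fintype.card_fin, Fintype.card_fin]
  ring

theorem sum_prod_pm_mul_homogenize {n k : ℕ} {a : Finset (Fin n) → ℝ}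
    (hdeg : ∀ S : Finset (Fin n), k < S.card → a S = 0) (x : Fin k → Fin n → ℝ) :
    ∑ ε : Fin k → Bool, (∏ j, pm (ε j)) *
        homogenize k a (∑ j, pm (ε j)) (fun i => ∑ j, pm (ε j) * x j i) =
      2 ^ k * k.factorial * decF k a x := by
  simp_rw [homogenize, decF, Finset.mul_sum]
  rw [Finset.sum_comm]
  refine Finset.sum_congr rfl fun S _ => ?_
  rcases le_or_gt #S k with hS | hS
  · calc ∑ ε : Fin k → Bool, (∏ j, pm (ε j)) *
          (a S * (∑ j, pm (ε j)) ^ (k - #S) * ∏ i ∈ S, ∑ j, pm (ε j) * x j i)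
        = a S * ∑ ε : Fin k → Bool, (∏ j, pm (ε j)) *
            ((∑ j, pm (ε j)) ^ (k - #S) * ∏ i ∈ S, ∑ j, pm (ε j) * x j i) := by
          rw [Finset.mul_sum]
          exact Finset.sum_congr rfl fun ε _ => by ring
      _ = _ := by
          rw [sum_prod_pm_mul_pow_mul_prod x hS]
          field_simp
          rw [Finset.mul_sum]
  · simp [hdeg S hS]

end Polarization

lemma abs_sum_le_card {k : ℕ} {f : Fin k → ℝ} (hf : ∀ j, |f j| ≤ 1) : |∑ j, f j| ≤ k :=
  (Finset.abs_sum_le_sum_abs _ _).trans <|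
    (Finset.sum_le_card_nsmul _ _ 1 fun j _ => hf j).trans_eq (by simp)

theorem abs_decF_le {n k : ℕ} {a : Finset (Fin n) → ℝ}
    (hdeg : ∀ S : Finset (Fin n), k < S.card → a S = 0) {M : ℝ}
    (hM : ∀ x : Fin n → Bool, |evalPoly a (fun i => pm (x i))| ≤ M)
    {x : Fin k → Fin n → ℝ} (hx : ∀ j i, |x j i| ≤ 1) :
    |decF k a x| ≤ (k : ℝ) ^ k / k.factorial * (2 ^ k * M) := by
  have hterm : ∀ ε : Fin k → Bool, |(∏ j, pm (ε j)) *
      homogenize k a (∑ j, pm (ε j)) (fun i => ∑ j, pm (ε j) * x j i)| ≤ k ^ k * (2 ^ k * M) := by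
    intro ε
    rw [abs_mul, Finset.abs_prod]
    simp only [abs_pm, Finset.prod_const_one, one_mul]
    exact abs_homogenize_le_mul_pow hdeg hM (Nat.cast_nonneg k)
      (abs_sum_le_card fun j => (abs_pm _).le)
      fun i => abs_sum_le_card fun j => by rw [abs_mul, abs_pm, one_mul]; exact hx j i
  have hsum : 2 ^ k * (k.factorial * |decF k a x|) ≤ 2 ^ k * ((k : ℝ) ^ k * (2 ^ k * M)) := by
    rw [← mul_assoc, ← abs_of_pos (by positivity : (0 : ℝ) < 2 ^ k * k.factorial), ← abs_mul,
      ← sum_prod_pm_mul_homogenize hdeg]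
    calc _ ≤ _ := Finset.abs_sum_le_sum_abs _ _
      _ ≤ ∑ _ε : Fin k → Bool, (k : ℝ) ^ k * (2 ^ k * M) := Finset.sum_le_sum fun ε _ => hterm ε
      _ = _ := by simp
  rw [div_mul_eq_mul_div, le_div_iff₀ (by positivity), mul_comm]
  exact le_of_mul_le_mul_left hsum (by positivity)

theorem stmt9 :
    ∀ (n k : ℕ) (a : Finset (Fin n) → ℝ),
      (∀ S : Finset (Fin n), k < S.card → a S = 0) →
      ∀ M : ℝ, (∀ x : Fin n → Bool, |evalPoly a (fun i => pm (x i))| ≤ M) →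
        ∀ X : Fin k → Fin n → Bool,
          |decF k a (fun j i => pm (X j i))| ≤ (2 * Real.exp 1) ^ k * M := by
  intro n k a hdeg M hM X
  have hM0 : 0 ≤ M := (abs_nonneg _).trans (hM fun _ => true)
  have hexp : (k : ℝ) ^ k / k.factorial ≤ Real.exp 1 ^ k := by
    simpa [← Real.exp_nat_mul] using Real.pow_div_factorial_le_exp _ (Nat.cast_nonneg k) k
  calc |decF k a (fun j i => pm (X j i))| ≤ (k : ℝ) ^ k / k.factorial * (2 ^ k * M) :=
        abs_decF_le hdeg hM fun j i => (abs_pm _).le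
    _ ≤ Real.exp 1 ^ k * (2 ^ k * M) := by gcongr
    _ = (2 * Real.exp 1) ^ k * M := by ring
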